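/- arXiv:quant-ph/0106052 — 2 statements merged into one kernel-verified Lean document; each statement's English description precedes it below -/
import Mathlib

section
/- With T, R, U_{j,k}, the maximally entangled state φ on ℂ^d⊗ℂ^d, and a quantum channel N as above, consider the ensemble of d² equiprobable states σ_{j,k} = (N⊗I)((U_{j,k}⊗I) φ (U_{j,k}⊗I)†). Its Holevo quantity satisfies H((1/d²) Σ_{j,k} σ_{j,k}) − (1/d²) Σ_{j,k} H(σ_{j,k}) = H(I/d) + H(N(I/d)) − H((N⊗I)(φ)) = log₂ d + H(N(I/d)) − H((N⊗I)(φ)). -/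
open scoped Kronecker ComplexOrder

namespace QIT

noncomputable section

open Matrix

open scoped Classical in
/-- von Neumann entropy (base 2): Shannon entropy of the eigenvalues. -/
def entropy {n : Type*} [Fintype n] [DecidableEq n] (ρ : Matrix n n ℂ) : ℝ :=
  if h : ρ.IsHermitian then -∑ i, h.eigenvalues i * Real.logb 2 (h.eigenvalues i) else 0

/-- A density matrix: positive semidefinite with unit trace. -/
def IsDensity {n : Type*} [Fintype n] (ρ : Matrix n n ℂ) : Prop :=
  ρ.PosSemidef ∧ ρ.trace = 1

/-- A family of Kraus operators for a trace-preserving map. -/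
def IsKraus {ι I O : Type*} [Fintype ι] [Fintype I] [Fintype O] [DecidableEq I]
    (A : ι → Matrix O I ℂ) : Prop :=
  ∑ k, (A k)ᴴ * A k = 1

/-- The action of the channel with Kraus family `A`. -/
def kApply {ι I O : Type*} [Fintype ι] [Fintype I] [Fintype O]
    (A : ι → Matrix O I ℂ) (σ : Matrix I I ℂ) : Matrix O O ℂ :=
  ∑ k, A k * σ * (A k)ᴴ

/-- The action of `N ⊗ I` where `N` has Kraus family `A`. -/
def kApplyLeft {ι I O R : Type*} [Fintype ι] [Fintype I] [Fintype O] [Fintype R] [DecidableEq R]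
    (A : ι → Matrix O I ℂ) (σ : Matrix (I × R) (I × R) ℂ) : Matrix (O × R) (O × R) ℂ :=
  ∑ k, (A k ⊗ₖ (1 : Matrix R R ℂ)) * σ * ((A k ⊗ₖ (1 : Matrix R R ℂ)))ᴴ

/-- The rank-one density matrix `|Φ⟩⟨Φ|`. -/
def pureState {I : Type*} (Φ : I → ℂ) : Matrix I I ℂ :=
  Matrix.of fun i j => Φ i * star (Φ j)

/-- `Φ` is a purification of `ρ`: tracing out the reference system yields `ρ`. -/
def IsPurification {I R : Type*} [Fintype R] (Φ : I × R → ℂ) (ρ : Matrix I I ℂ) : Prop :=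
  ∀ i j, ∑ r, Φ (i, r) * star (Φ (j, r)) = ρ i j


/-- The generalized Pauli shift matrix `T` with `T_{a,b} = δ_{a, b-1 mod d}`. -/
def shiftT (d : ℕ) : Matrix (Fin d) (Fin d) ℂ :=
  Matrix.of fun a b => if ((a : ℕ) + 1) % d = (b : ℕ) then 1 else 0

/-- The generalized Pauli phase matrix `R` with `R_{a,b} = e^{2πia/d} δ_{a,b}`. -/
def phaseR (d : ℕ) : Matrix (Fin d) (Fin d) ℂ :=
  Matrix.of fun a b => if a = b then Complex.exp (2 * Real.pi * Complex.I * (a : ℕ) / d) else 0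

/-- The generalized Pauli matrices `U_{j,k} = T^j R^k`. -/
def pauliU (d : ℕ) (j k : Fin d) : Matrix (Fin d) (Fin d) ℂ :=
  shiftT d ^ (j : ℕ) * phaseR d ^ (k : ℕ)

/-- The maximally entangled state vector `(1/√d) Σ_i |i⟩⊗|i⟩` on `ℂ^d ⊗ ℂ^d`. -/
def maxEnt (d : ℕ) : Fin d × Fin d → ℂ :=
  fun p => if p.1 = p.2 then ((1 / Real.sqrt d : ℝ) : ℂ) else 0


section Aux
open Polynomial
variable {n : Type*} [Fintype n] [DecidableEq n]


lemma charpoly_diagonal (μ : n → ℂ) :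
    (Matrix.diagonal μ).charpoly = ∏ i, (X - C (μ i)) := by
  have h : charmatrix (Matrix.diagonal μ) = Matrix.diagonal (fun i => (X : ℂ[X]) - C (μ i)) := by
    ext i j
    by_cases h : i = j
    · subst h; simp [charmatrix_apply_eq]
    · simp [charmatrix_apply_ne _ _ _ h, Matrix.diagonal_apply_ne _ h]
  rw [Matrix.charpoly, h, Matrix.det_diagonal]

lemma charpoly_conj_unitary (V M : Matrix n n ℂ) (h1 : V * Vᴴ = 1) (h2 : Vᴴ * V = 1) :
    (V * M * Vᴴ).charpoly = M.charpoly := by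
  have mapmul : ∀ (P Q : Matrix n n ℂ), ((P * Q).map C) = (P.map C) * (Q.map C) := by
    intro P Q
    exact (RingHom.mapMatrix (C : ℂ →+* ℂ[X])).map_mul P Q
  have hcm : charmatrix (V * M * Vᴴ) = (V.map C) * charmatrix M * (Vᴴ.map C) := by
    unfold charmatrix
    rw [mul_sub, sub_mul]
    congr 1
    · -- scalar part
      have hc : V.map C * Matrix.scalar n (X : ℂ[X]) = Matrix.scalar n (X : ℂ[X]) * V.map C :=
        (Matrix.scalar_commute (X : ℂ[X]) (Commute.all _) (V.map C)).symm
      rw [hc, Matrix.mul_assoc, ← mapmul, h1, Matrix.map_one _ (map_zero C) (map_one C), mul_one]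
    · simp only [RingHom.mapMatrix_apply]
      rw [← mapmul, ← mapmul]
  rw [Matrix.charpoly, Matrix.charpoly, hcm, Matrix.det_mul, Matrix.det_mul]
  have : (V.map C).det * (Vᴴ.map C).det = 1 := by
    rw [mul_comm, ← Matrix.det_mul, ← mapmul, h2, Matrix.map_one _ (map_zero C) (map_one C),
      Matrix.det_one]
  calc (V.map C).det * (charmatrix M).det * (Vᴴ.map C).det
      = (V.map C).det * (Vᴴ.map C).det * (charmatrix M).det := by ring
    _ = (charmatrix M).det := by rw [this, one_mul]

lemma isHermitian_conj_diag (V : Matrix n n ℂ) (μ : n → ℝ) :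
    (V * Matrix.diagonal (fun i => (μ i : ℂ)) * Vᴴ).IsHermitian := by
  unfold Matrix.IsHermitian
  rw [Matrix.conjTranspose_mul, Matrix.conjTranspose_mul, Matrix.conjTranspose_conjTranspose,
    Matrix.diagonal_conjTranspose, Matrix.mul_assoc]
  congr 2
  ext i j
  simp [Matrix.diagonal_apply]

lemma eig_multiset_conj_diag (V : Matrix n n ℂ) (h1 : V * Vᴴ = 1) (h2 : Vᴴ * V = 1)
    (μ : n → ℝ) (hM : (V * Matrix.diagonal (fun i => (μ i : ℂ)) * Vᴴ).IsHermitian) :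
    Finset.univ.val.map hM.eigenvalues = Finset.univ.val.map μ := by
  set M := V * Matrix.diagonal (fun i => (μ i : ℂ)) * Vᴴ with hMdef
  have key : ∀ (f : n → ℝ), (∏ i, (X - C ((f i : ℂ)))) =
      ((Finset.univ.val.map (fun i => ((f i : ℝ) : ℂ))).map (fun a => X - C a)).prod := by
    intro f
    rw [Multiset.map_map]
    rfl
  have hch1 : M.charpoly = ∏ i, (X - C ((μ i : ℂ))) := by
    rw [hMdef, charpoly_conj_unitary V _ h1 h2, charpoly_diagonal]
  have hU1 : (hM.eigenvectorUnitary : Matrix n n ℂ) * (hM.eigenvectorUnitary : Matrix n n ℂ)ᴴ = 1 := by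
    simpa [star] using (Matrix.mem_unitaryGroup_iff.mp hM.eigenvectorUnitary.2)
  have hU2 : (hM.eigenvectorUnitary : Matrix n n ℂ)ᴴ * (hM.eigenvectorUnitary : Matrix n n ℂ) = 1 := by
    simpa [star] using (Matrix.mem_unitaryGroup_iff'.mp hM.eigenvectorUnitary.2)
  have hch2 : M.charpoly = ∏ i, (X - C ((hM.eigenvalues i : ℂ))) := by
    conv_lhs => rw [hM.spectral_theorem]
    have : (Matrix.diagonal ((RCLike.ofReal : ℝ → ℂ) ∘ hM.eigenvalues)) =
        Matrix.diagonal (fun i => ((hM.eigenvalues i : ℝ) : ℂ)) := rfl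
    rw [this]
    rw [Unitary.conjStarAlgAut_apply]
    rw [show (star (hM.eigenvectorUnitary : Matrix n n ℂ)) = (hM.eigenvectorUnitary : Matrix n n ℂ)ᴴ from rfl]
    rw [charpoly_conj_unitary _ _ hU1 hU2, charpoly_diagonal]
  have hroots : (Finset.univ.val.map (fun i => ((hM.eigenvalues i : ℝ) : ℂ))) =
      (Finset.univ.val.map (fun i => ((μ i : ℝ) : ℂ))) := by
    have := hch1.symm.trans hch2
    rw [key, key] at this
    have h3 := congrArg Polynomial.roots this
    rw [Polynomial.roots_multiset_prod_X_sub_C, Polynomial.roots_multiset_prod_X_sub_C] at h3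
    exact h3.symm
  have : (Finset.univ.val.map hM.eigenvalues).map (fun x : ℝ => (x : ℂ)) =
      (Finset.univ.val.map μ).map (fun x : ℝ => (x : ℂ)) := by
    rw [Multiset.map_map, Multiset.map_map]
    exact hroots
  exact Multiset.map_injective Complex.ofReal_injective this

lemma sum_eig_conj_diag (V : Matrix n n ℂ) (h1 : V * Vᴴ = 1) (h2 : Vᴴ * V = 1)
    (μ : n → ℝ) (hM : (V * Matrix.diagonal (fun i => (μ i : ℂ)) * Vᴴ).IsHermitian)
    (g : ℝ → ℝ) :
    ∑ i, g (hM.eigenvalues i) = ∑ i, g (μ i) := by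
  have h := eig_multiset_conj_diag V h1 h2 μ hM
  have e1 : ∑ i, g (hM.eigenvalues i) = ((Finset.univ.val.map hM.eigenvalues).map g).sum := by
    rw [Multiset.map_map]; rfl
  have e2 : ∑ i, g (μ i) = ((Finset.univ.val.map μ).map g).sum := by
    rw [Multiset.map_map]; rfl
  rw [e1, e2, h]

lemma entropy_conj_diag (V : Matrix n n ℂ) (h1 : V * Vᴴ = 1) (h2 : Vᴴ * V = 1) (μ : n → ℝ) :
    entropy (V * Matrix.diagonal (fun i => (μ i : ℂ)) * Vᴴ) =
      -∑ i, μ i * Real.logb 2 (μ i) := by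
  have hM := isHermitian_conj_diag V μ
  rw [entropy, dif_pos hM]
  exact neg_inj.mpr (sum_eig_conj_diag V h1 h2 μ hM (fun x => x * Real.logb 2 x))

lemma entropy_unitary_conj (W B : Matrix n n ℂ) (h1 : W * Wᴴ = 1) (h2 : Wᴴ * W = 1)
    (hB : B.IsHermitian) : entropy (W * B * Wᴴ) = entropy B := by
  set U : Matrix n n ℂ := (hB.eigenvectorUnitary : Matrix n n ℂ) with hUdef
  have hU1 : U * Uᴴ = 1 := by
    simpa [star] using (Matrix.mem_unitaryGroup_iff.mp hB.eigenvectorUnitary.2)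
  have hU2 : Uᴴ * U = 1 := by
    simpa [star] using (Matrix.mem_unitaryGroup_iff'.mp hB.eigenvectorUnitary.2)
  have hspec : B = U * Matrix.diagonal (fun i => ((hB.eigenvalues i : ℝ) : ℂ)) * Uᴴ :=
    hB.spectral_theorem
  have hWU1 : (W * U) * (W * U)ᴴ = 1 := by
    rw [Matrix.conjTranspose_mul, Matrix.mul_assoc, ← Matrix.mul_assoc U, hU1, Matrix.one_mul, h1]
  have hWU2 : (W * U)ᴴ * (W * U) = 1 := by
    rw [Matrix.conjTranspose_mul, Matrix.mul_assoc, ← Matrix.mul_assoc Wᴴ, h2,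
      Matrix.one_mul, hU2]
  have e1 : W * B * Wᴴ = (W * U) * Matrix.diagonal (fun i => ((hB.eigenvalues i : ℝ) : ℂ)) * (W * U)ᴴ := by
    rw [Matrix.conjTranspose_mul]
    conv_lhs => rw [hspec]
    simp only [Matrix.mul_assoc]
  rw [e1, entropy_conj_diag _ hWU1 hWU2, entropy, dif_pos hB]

end Aux

section Pauli
open Complex
open Fin.NatCast

variable {d : ℕ} [NeZero d]

/-- The primitive `d`-th root of unity. -/
noncomputable def om (d : ℕ) : ℂ := Complex.exp (2 * Real.pi * Complex.I / d)

lemma om_mul_star : om d * star (om d) = 1 := by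
  have h : om d = Complex.exp (((2 * Real.pi / d : ℝ) : ℂ) * Complex.I) := by
    rw [om]; congr 1; push_cast; ring
  have habs : ‖om d‖ = 1 := by rw [h]; exact Complex.norm_exp_ofReal_mul_I _
  calc om d * star (om d) = (Complex.normSq (om d) : ℂ) := Complex.mul_conj _
    _ = 1 := by rw [Complex.normSq_eq_norm_sq, habs]; norm_num

lemma om_ne_zero : om d ≠ 0 := by
  intro h0
  have := om_mul_star (d := d)
  rw [h0] at this; simp at this

lemma om_pow_d : om d ^ d = 1 := by
  rw [om, ← Complex.exp_nat_mul]
  have hd : (d : ℂ) ≠ 0 := Nat.cast_ne_zero.mpr (NeZero.ne d)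
  have h : (d : ℂ) * (2 * Real.pi * Complex.I / d) = 2 * Real.pi * Complex.I := by
    field_simp
  rw [h]
  exact Complex.exp_two_pi_mul_I

lemma om_primitive : IsPrimitiveRoot (om d) d :=
  Complex.isPrimitiveRoot_exp d (NeZero.ne d)

lemma star_om_eq_inv : star (om d) = (om d)⁻¹ :=
  eq_inv_of_mul_eq_one_left (by rw [mul_comm]; exact om_mul_star)

lemma geom_sum_zeta (ζ : ℂ) (hζd : ζ ^ d = 1) (hζ : ζ ≠ 1) :
    ∑ k : Fin d, ζ ^ (k : ℕ) = 0 := by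
  rw [Fin.sum_univ_eq_sum_range (fun k => ζ ^ k) d, geom_sum_eq hζ, hζd, sub_self, zero_div]

lemma fin_add_cond (a b j : Fin d) : a + j = b ↔ j = b - a := by
  constructor
  · intro h; rw [← h, add_comm]; exact (add_sub_cancel_right j a).symm
  · intro h; rw [h, add_comm]; exact sub_add_cancel b a

lemma shiftT_eq : shiftT d = Matrix.of fun a b : Fin d => if a + 1 = b then 1 else 0 := by
  ext a b
  simp only [shiftT, Matrix.of_apply]
  have h1 : ((1 : Fin d) : ℕ) = 1 % d := rfl
  have hval : ((a + 1 : Fin d) : ℕ) = ((a : ℕ) + 1) % d := by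
    rw [Fin.val_add, h1]
    conv_rhs => rw [Nat.add_mod]
    rw [Nat.mod_eq_of_lt a.isLt]
  exact if_congr (by rw [Fin.ext_iff, hval]) rfl rfl

lemma shiftT_pow (m : ℕ) :
    shiftT d ^ m = Matrix.of fun a b : Fin d => if a + (m : Fin d) = b then 1 else 0 := by
  induction m with
  | zero =>
    ext a b
    simp [Matrix.one_apply]
  | succ m ih =>
    rw [pow_succ, ih, shiftT_eq]
    ext a b
    rw [Matrix.mul_apply]
    simp only [Matrix.of_apply]
    rw [Finset.sum_eq_single (a + (m : Fin d))]
    · rw [if_pos rfl, one_mul,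
        show ((m + 1 : ℕ) : Fin d) = (m : Fin d) + 1 by push_cast; ring, ← add_assoc]
    · intro c _ hc
      rw [if_neg (fun h => hc h.symm), zero_mul]
    · intro h
      exact absurd (Finset.mem_univ _) h

lemma phaseR_pow (k : ℕ) :
    phaseR d ^ k = Matrix.diagonal fun a : Fin d => om d ^ ((a : ℕ) * k) := by
  have h : phaseR d = Matrix.diagonal fun a : Fin d => om d ^ (a : ℕ) := by
    ext a b
    by_cases hab : a = b
    · subst hab
      simp only [phaseR, Matrix.of_apply, if_pos rfl, Matrix.diagonal_apply_eq, if_true,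
        eq_self_iff_true]
      rw [om, ← Complex.exp_nat_mul]
      congr 1
      ring
    · simp [phaseR, Matrix.diagonal_apply_ne _ hab, hab]
  rw [h, Matrix.diagonal_pow]
  ext a b
  rcases eq_or_ne a b with rfl | hab
  · simp [Pi.pow_apply, pow_mul]
  · simp [Matrix.diagonal_apply_ne _ hab]

lemma pauliU_apply (j k : Fin d) (a b : Fin d) :
    pauliU d j k a b = if a + j = b then om d ^ ((b : ℕ) * (k : ℕ)) else 0 := by
  rw [pauliU, shiftT_pow, phaseR_pow, Matrix.mul_diagonal]
  simp only [Matrix.of_apply, Fin.cast_val_eq_self]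
  split <;> simp

lemma pauli_sum (a b a' b' : Fin d) :
    ∑ j : Fin d, ∑ k : Fin d, pauliU d j k a b * star (pauliU d j k a' b') =
      if a = a' ∧ b = b' then (d : ℂ) else 0 := by
  have hterm : ∀ j k : Fin d, pauliU d j k a b * star (pauliU d j k a' b') =
      ((if a + j = b then (1:ℂ) else 0) * (if a' + j = b' then 1 else 0)) *
        ((om d ^ (b : ℕ) * star (om d) ^ (b' : ℕ)) ^ (k : ℕ)) := by
    intro j k
    rw [pauliU_apply, pauliU_apply]
    split <;> split <;> simp [star_pow, mul_pow, pow_mul]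
  simp only [hterm]
  rw [← Finset.sum_mul_sum]
  set ζ : ℂ := om d ^ (b : ℕ) * star (om d) ^ (b' : ℕ) with hζ
  by_cases hbb : b = b'
  · subst hbb
    have hζ1 : ζ = 1 := by rw [hζ, ← mul_pow, om_mul_star, one_pow]
    have hsum2 : ∑ k : Fin d, ζ ^ (k : ℕ) = (d : ℂ) := by simp [hζ1]
    have hsum1 : ∑ j : Fin d, (if a + j = b then (1:ℂ) else 0) * (if a' + j = b then 1 else 0)
        = if a = a' then 1 else 0 := by
      have h : ∀ j : Fin d, (if a + j = b then (1:ℂ) else 0) * (if a' + j = b then 1 else 0)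
          = if j = b - a then (if a' + j = b then (1:ℂ) else 0) else 0 := by
        intro j
        by_cases hj : a + j = b
        · rw [if_pos hj, one_mul, if_pos ((fin_add_cond a b j).mp hj)]
        · rw [if_neg hj, zero_mul, if_neg (fun hc => hj ((fin_add_cond a b j).mpr hc))]
      simp only [h]
      rw [Finset.sum_ite_eq' Finset.univ (b - a)
        (fun j => if a' + j = b then (1:ℂ) else 0), if_pos (Finset.mem_univ _)]
      have hcond : (a' + (b - a) = b) ↔ (a = a') := by
        rw [fin_add_cond a' b (b - a), sub_right_inj]
      by_cases hx : a = a'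
      · rw [if_pos (hcond.mpr hx), if_pos hx]
      · rw [if_neg (fun hc => hx (hcond.mp hc)), if_neg hx]
    rw [hsum1, hsum2]
    by_cases hx : a = a'
    · simp [hx]
    · simp [hx]
  · have hζd : ζ ^ d = 1 := by
      rw [hζ, mul_pow, ← pow_mul, ← pow_mul, mul_comm (b : ℕ) d, mul_comm (b' : ℕ) d,
        pow_mul, pow_mul, om_pow_d, ← star_pow, om_pow_d]
      simp
    have hζne : ζ ≠ 1 := by
      intro h
      apply hbb
      rw [hζ, star_om_eq_inv, inv_pow] at h
      have hnz : (om d : ℂ) ^ (b' : ℕ) ≠ 0 := pow_ne_zero _ om_ne_zero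
      have h2 : om d ^ (b : ℕ) = om d ^ (b' : ℕ) := by
        field_simp at h
        exact h
      exact Fin.ext (om_primitive.pow_inj b.isLt b'.isLt h2)
    rw [geom_sum_zeta ζ hζd hζne, mul_zero, if_neg (fun h => hbb h.2)]

end Pauli

section States
open Complex

variable {d : ℕ} [NeZero d]

lemma d_real_ne : ((d : ℝ)) ≠ 0 := Nat.cast_ne_zero.mpr (NeZero.ne d)
lemma d_cplx_ne : ((d : ℂ)) ≠ 0 := Nat.cast_ne_zero.mpr (NeZero.ne d)

lemma pure_maxEnt_apply (p q : Fin d × Fin d) :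
    pureState (maxEnt d) p q = if p.1 = p.2 ∧ q.1 = q.2 then ((d : ℂ))⁻¹ else 0 := by
  have hb : ((Real.sqrt d : ℝ) : ℂ) * ((Real.sqrt d : ℝ) : ℂ) = (d : ℂ) := by
    rw [← Complex.ofReal_mul, Real.mul_self_sqrt (Nat.cast_nonneg d)]
    norm_cast
  simp only [pureState, maxEnt, Matrix.of_apply]
  by_cases h1 : p.1 = p.2 <;> by_cases h2 : q.1 = q.2 <;> simp [h1, h2, ← mul_inv, hb]

lemma kron_conjTranspose {l m p q : Type*} (A : Matrix l m ℂ) (B : Matrix p q ℂ) :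
    (A ⊗ₖ B)ᴴ = Aᴴ ⊗ₖ Bᴴ := by
  ext ⟨i, j⟩ ⟨k, l⟩
  simp [Matrix.conjTranspose_apply, Matrix.kroneckerMap_apply, star_mul']

lemma sum_kron {ι : Type*} (s : Finset ι) {l m p q : Type*}
    (A : ι → Matrix l m ℂ) (B : Matrix p q ℂ) :
    (∑ i ∈ s, A i) ⊗ₖ B = ∑ i ∈ s, (A i ⊗ₖ B) := by
  ext ⟨i, j⟩ ⟨k, l⟩
  simp [Matrix.kroneckerMap_apply, Matrix.sum_apply, Finset.sum_mul]

lemma mulPhi_left (W : Matrix (Fin d) (Fin d) ℂ) :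
    (W ⊗ₖ (1 : Matrix (Fin d) (Fin d) ℂ)) * pureState (maxEnt d) =
      Matrix.of fun p s : Fin d × Fin d =>
        if s.1 = s.2 then (d : ℂ)⁻¹ * W p.1 p.2 else 0 := by
  ext ⟨a, b⟩ ⟨s1, s2⟩
  rw [Matrix.mul_apply]
  simp only [Fintype.sum_prod_type, Matrix.kroneckerMap_apply, pure_maxEnt_apply,
    Matrix.one_apply, Matrix.of_apply]
  by_cases hs : s1 = s2
  · simp [hs, ite_and, mul_ite, ite_mul, Finset.sum_ite_eq, Finset.sum_ite_eq', mul_comm]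
  · simp [hs, ite_and]

lemma mulPhi_right (W : Matrix (Fin d) (Fin d) ℂ) :
    ((1 : Matrix (Fin d) (Fin d) ℂ) ⊗ₖ Wᵀ) * pureState (maxEnt d) =
      Matrix.of fun p s : Fin d × Fin d =>
        if s.1 = s.2 then (d : ℂ)⁻¹ * W p.1 p.2 else 0 := by
  ext ⟨a, b⟩ ⟨s1, s2⟩
  rw [Matrix.mul_apply]
  simp only [Fintype.sum_prod_type, Matrix.kroneckerMap_apply, pure_maxEnt_apply,
    Matrix.one_apply, Matrix.transpose_apply, Matrix.of_apply]
  by_cases hs : s1 = s2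
  · simp [hs, ite_and, mul_ite, ite_mul, Finset.sum_ite_eq, Finset.sum_ite_eq', mul_comm]
  · simp [hs, ite_and]

lemma conj_phi_left (W : Matrix (Fin d) (Fin d) ℂ) :
    (W ⊗ₖ (1 : Matrix (Fin d) (Fin d) ℂ)) * pureState (maxEnt d) *
        (W ⊗ₖ (1 : Matrix (Fin d) (Fin d) ℂ))ᴴ =
      Matrix.of fun p q : Fin d × Fin d =>
        (d : ℂ)⁻¹ * (W p.1 p.2 * star (W q.1 q.2)) := by
  rw [mulPhi_left]
  ext ⟨a, b⟩ ⟨a', b'⟩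
  rw [Matrix.mul_apply]
  simp only [Fintype.sum_prod_type, Matrix.conjTranspose_apply, Matrix.kroneckerMap_apply,
    Matrix.one_apply, Matrix.of_apply]
  simp [ite_mul, mul_ite, Finset.sum_ite_eq, Finset.sum_ite_eq', eq_comm, mul_assoc]
  simp [apply_ite (starRingEnd ℂ), mul_ite, Finset.sum_ite_eq]

lemma conj_phi_right (W : Matrix (Fin d) (Fin d) ℂ) :
    ((1 : Matrix (Fin d) (Fin d) ℂ) ⊗ₖ Wᵀ) * pureState (maxEnt d) *
        ((1 : Matrix (Fin d) (Fin d) ℂ) ⊗ₖ Wᵀ)ᴴ =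
      Matrix.of fun p q : Fin d × Fin d =>
        (d : ℂ)⁻¹ * (W p.1 p.2 * star (W q.1 q.2)) := by
  rw [mulPhi_right]
  ext ⟨a, b⟩ ⟨a', b'⟩
  rw [Matrix.mul_apply]
  simp only [Fintype.sum_prod_type, Matrix.conjTranspose_apply, Matrix.kroneckerMap_apply,
    Matrix.one_apply, Matrix.transpose_apply, Matrix.of_apply]
  simp [ite_mul, mul_ite, Finset.sum_ite_eq, Finset.sum_ite_eq', eq_comm, mul_assoc]
  simp [apply_ite (starRingEnd ℂ), mul_ite, Finset.sum_ite_eq]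

lemma ricochet (W : Matrix (Fin d) (Fin d) ℂ) :
    (W ⊗ₖ (1 : Matrix (Fin d) (Fin d) ℂ)) * pureState (maxEnt d) *
        (W ⊗ₖ (1 : Matrix (Fin d) (Fin d) ℂ))ᴴ =
      ((1 : Matrix (Fin d) (Fin d) ℂ) ⊗ₖ Wᵀ) * pureState (maxEnt d) *
        ((1 : Matrix (Fin d) (Fin d) ℂ) ⊗ₖ Wᵀ)ᴴ := by
  rw [conj_phi_left, conj_phi_right]

lemma sum_pauli_conj :
    ∑ j : Fin d, ∑ k : Fin d,
      (pauliU d j k ⊗ₖ (1 : Matrix (Fin d) (Fin d) ℂ)) * pureState (maxEnt d) *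
        (pauliU d j k ⊗ₖ (1 : Matrix (Fin d) (Fin d) ℂ))ᴴ = 1 := by
  ext p q
  simp only [Matrix.sum_apply, conj_phi_left, Matrix.of_apply]
  have hfactor : ∀ (f : Fin d → Fin d → ℂ),
      (∑ j : Fin d, ∑ k : Fin d, (d : ℂ)⁻¹ * f j k) = (d : ℂ)⁻¹ * ∑ j, ∑ k, f j k := by
    intro f
    rw [Finset.mul_sum]
    exact Finset.sum_congr rfl fun j _ => (Finset.mul_sum _ _ _).symm
  rw [hfactor (fun j k => pauliU d j k p.1 p.2 * star (pauliU d j k q.1 q.2)),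
    pauli_sum p.1 p.2 q.1 q.2, Matrix.one_apply]
  by_cases h : p = q
  · subst h
    rw [if_pos ⟨rfl, rfl⟩, if_pos rfl, inv_mul_cancel₀ d_cplx_ne]
  · rw [if_neg (fun hc => h (Prod.ext hc.1 hc.2)), if_neg h, mul_zero]

lemma pauliU_mul_conjTranspose (j k : Fin d) :
    pauliU d j k * (pauliU d j k)ᴴ = 1 := by
  ext a a'
  rw [Matrix.mul_apply]
  simp only [Matrix.conjTranspose_apply, pauliU_apply, apply_ite (star : ℂ → ℂ), star_zero]
  have h : ∀ b : Fin d, (if a + j = b then om d ^ ((b:ℕ) * (k:ℕ)) else 0) *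
      (if a' + j = b then star (om d ^ ((b:ℕ) * (k:ℕ))) else 0) =
      if b = a + j then (if a' + j = b then (om d * star (om d)) ^ ((b:ℕ) * (k:ℕ)) else 0) else 0 := by
    intro b
    by_cases h1 : a + j = b
    · rw [if_pos h1, if_pos h1.symm]
      by_cases h2 : a' + j = b
      · rw [if_pos h2, if_pos h2, mul_pow, star_pow]
      · rw [if_neg h2, if_neg h2, mul_zero]
    · rw [if_neg h1, zero_mul, if_neg (fun h : b = a + j => h1 h.symm)]
  simp only [h]
  rw [Finset.sum_ite_eq' Finset.univ (a + j), if_pos (Finset.mem_univ _), om_mul_star, one_pow,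
    Matrix.one_apply]
  by_cases hx : a = a'
  · rw [if_pos (by rw [hx]), if_pos hx]
  · rw [if_neg (fun h => hx (add_right_cancel h).symm), if_neg hx]

lemma pauliU_conjTranspose_mul (j k : Fin d) :
    (pauliU d j k)ᴴ * pauliU d j k = 1 :=
  mul_eq_one_comm.mp (pauliU_mul_conjTranspose j k)

end States

section Channel
open Complex

variable {ι I O R : Type*} [Fintype ι] [Fintype I] [Fintype O] [Fintype R]
  [DecidableEq I] [DecidableEq O] [DecidableEq R]

lemma pureState_isHermitian (Φ : I → ℂ) : (pureState Φ).IsHermitian := by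
  ext i j
  simp [Matrix.conjTranspose_apply, pureState, star_mul', mul_comm]

lemma kApplyLeft_isHermitian (A : ι → Matrix O I ℂ) {X : Matrix (I × R) (I × R) ℂ}
    (hX : X.IsHermitian) : (kApplyLeft A X).IsHermitian := by
  show (kApplyLeft A X)ᴴ = kApplyLeft A X
  unfold kApplyLeft
  rw [Matrix.conjTranspose_sum]
  refine Finset.sum_congr rfl fun t _ => ?_
  rw [Matrix.conjTranspose_mul, Matrix.conjTranspose_mul, Matrix.conjTranspose_conjTranspose,
    hX.eq, Matrix.mul_assoc]

lemma kApply_isHermitian (A : ι → Matrix O I ℂ) {X : Matrix I I ℂ}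
    (hX : X.IsHermitian) : (kApply A X).IsHermitian := by
  show (kApply A X)ᴴ = kApply A X
  unfold kApply
  rw [Matrix.conjTranspose_sum]
  refine Finset.sum_congr rfl fun t _ => ?_
  rw [Matrix.conjTranspose_mul, Matrix.conjTranspose_mul, Matrix.conjTranspose_conjTranspose,
    hX.eq, Matrix.mul_assoc]

lemma kApply_posSemidef (A : ι → Matrix O I ℂ) {X : Matrix I I ℂ}
    (hX : X.PosSemidef) : (kApply A X).PosSemidef := by
  unfold kApply
  refine Finset.sum_induction _ _ (fun a b ha hb => ha.add hb) Matrix.PosSemidef.zero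
    (fun t _ => hX.mul_mul_conjTranspose_same (A t))

lemma kApplyLeft_sum {J : Type*} (A : ι → Matrix O I ℂ) (s : Finset J)
    (X : J → Matrix (I × R) (I × R) ℂ) :
    kApplyLeft A (∑ i ∈ s, X i) = ∑ i ∈ s, kApplyLeft A (X i) := by
  unfold kApplyLeft
  rw [Finset.sum_comm]
  exact Finset.sum_congr rfl fun t _ => by rw [Matrix.mul_sum, Matrix.sum_mul]

lemma kApplyLeft_one (A : ι → Matrix O I ℂ) :
    kApplyLeft A (1 : Matrix (I × R) (I × R) ℂ) =
      (∑ t, A t * (A t)ᴴ) ⊗ₖ (1 : Matrix R R ℂ) := by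
  unfold kApplyLeft
  rw [sum_kron]
  refine Finset.sum_congr rfl fun t _ => ?_
  rw [Matrix.mul_one, kron_conjTranspose, Matrix.conjTranspose_one,
    ← Matrix.mul_kronecker_mul, Matrix.mul_one]

lemma smul_one_diag (c : ℂ) : c • (1 : Matrix R R ℂ) = Matrix.diagonal (fun _ : R => c) := by
  ext i j
  by_cases h : i = j <;> simp [h, Matrix.one_apply, Matrix.diagonal_apply]

lemma kApply_smul_one {d : ℕ} (A : ι → Matrix O (Fin d) ℂ) :
    kApply A ((d : ℂ)⁻¹ • 1) = (d : ℂ)⁻¹ • ∑ t, A t * (A t)ᴴ := by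
  unfold kApply
  rw [Finset.smul_sum]
  exact Finset.sum_congr rfl fun t _ => by
    rw [Matrix.mul_smul, Matrix.smul_mul, Matrix.mul_one]

lemma kApply_smul_one_trace {d : ℕ} [NeZero d] (A : ι → Matrix O (Fin d) ℂ)
    (hA : IsKraus A) : (kApply A ((d : ℂ)⁻¹ • 1)).trace = 1 := by
  rw [kApply_smul_one, Matrix.trace_smul, Matrix.trace_sum]
  have h : ∑ t, (A t * (A t)ᴴ).trace = ∑ t, ((A t)ᴴ * A t).trace :=
    Finset.sum_congr rfl fun t _ => Matrix.trace_mul_comm _ _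
  rw [h, ← Matrix.trace_sum, hA, Matrix.trace_one]
  simp [Fintype.card_fin, smul_eq_mul, inv_mul_cancel₀ (d_cplx_ne (d := d))]

lemma sum_eigenvalues_eq_one {n : Type*} [Fintype n] [DecidableEq n]
    {M : Matrix n n ℂ} (hM : M.IsHermitian) (ht : M.trace = 1) :
    ∑ i, hM.eigenvalues i = 1 := by
  have hU2 : (hM.eigenvectorUnitary : Matrix n n ℂ)ᴴ * (hM.eigenvectorUnitary : Matrix n n ℂ) = 1 := by
    simpa [star] using (Matrix.mem_unitaryGroup_iff'.mp hM.eigenvectorUnitary.2)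
  have h : M.trace = ∑ i, ((hM.eigenvalues i : ℝ) : ℂ) := by
    conv_lhs => rw [hM.spectral_theorem]
    rw [Unitary.conjStarAlgAut_apply]
    rw [Matrix.trace_mul_cycle,
      show (star (hM.eigenvectorUnitary : Matrix n n ℂ)) = (hM.eigenvectorUnitary : Matrix n n ℂ)ᴴ from rfl,
      hU2, Matrix.one_mul, Matrix.trace_diagonal]
    rfl
  rw [ht] at h
  have h2 : ((∑ i, hM.eigenvalues i : ℝ) : ℂ) = 1 := by
    push_cast
    exact h.symm
  exact_mod_cast h2

lemma smul_one_posSemidef {d : ℕ} : ((d : ℂ)⁻¹ • (1 : Matrix (Fin d) (Fin d) ℂ)).PosSemidef := by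
  rw [smul_one_diag]
  refine Matrix.posSemidef_diagonal_iff.mpr fun i => ?_
  rw [show ((d : ℂ))⁻¹ = (((d : ℝ)⁻¹ : ℝ) : ℂ) by push_cast; ring]
  exact Complex.zero_le_real.mpr (inv_nonneg.mpr (Nat.cast_nonneg d))

lemma kron_one_right_unitary (V : Matrix R R ℂ) (h1 : V * Vᴴ = 1) :
    ((1 : Matrix O O ℂ) ⊗ₖ V) * ((1 : Matrix O O ℂ) ⊗ₖ V)ᴴ = 1 := by
  rw [kron_conjTranspose, Matrix.conjTranspose_one, ← Matrix.mul_kronecker_mul,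
    Matrix.one_mul, h1, Matrix.one_kronecker_one]

lemma kron_left_unitary (V : Matrix O O ℂ) (h1 : V * Vᴴ = 1) :
    (V ⊗ₖ (1 : Matrix R R ℂ)) * (V ⊗ₖ (1 : Matrix R R ℂ))ᴴ = 1 := by
  rw [kron_conjTranspose, Matrix.conjTranspose_one, ← Matrix.mul_kronecker_mul,
    Matrix.one_mul, h1, Matrix.one_kronecker_one]

lemma conjT_transpose_comm (V : Matrix R R ℂ) : (Vᵀ)ᴴ = (Vᴴ)ᵀ := by
  ext i j
  simp [Matrix.conjTranspose_apply, Matrix.transpose_apply]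

lemma transpose_unitary (V : Matrix R R ℂ) (h2 : Vᴴ * V = 1) : Vᵀ * (Vᵀ)ᴴ = 1 := by
  rw [conjT_transpose_comm, ← Matrix.transpose_mul, h2, Matrix.transpose_one]

lemma kApplyLeft_conj (A : ι → Matrix O I ℂ) (W : Matrix R R ℂ) (X : Matrix (I × R) (I × R) ℂ) :
    kApplyLeft A (((1 : Matrix I I ℂ) ⊗ₖ W) * X * ((1 : Matrix I I ℂ) ⊗ₖ W)ᴴ) =
      ((1 : Matrix O O ℂ) ⊗ₖ W) * kApplyLeft A X * ((1 : Matrix O O ℂ) ⊗ₖ W)ᴴ := by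
  unfold kApplyLeft
  rw [Finset.mul_sum, Finset.sum_mul]
  refine Finset.sum_congr rfl fun t _ => ?_
  have c1 : (A t ⊗ₖ (1 : Matrix R R ℂ)) * ((1 : Matrix I I ℂ) ⊗ₖ W) =
      ((1 : Matrix O O ℂ) ⊗ₖ W) * (A t ⊗ₖ (1 : Matrix R R ℂ)) := by
    rw [← Matrix.mul_kronecker_mul, ← Matrix.mul_kronecker_mul, Matrix.mul_one, Matrix.one_mul,
      Matrix.mul_one, Matrix.one_mul]
  have c2 : ((1 : Matrix I I ℂ) ⊗ₖ W)ᴴ * (A t ⊗ₖ (1 : Matrix R R ℂ))ᴴ =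
      (A t ⊗ₖ (1 : Matrix R R ℂ))ᴴ * ((1 : Matrix O O ℂ) ⊗ₖ W)ᴴ := by
    rw [← Matrix.conjTranspose_mul, ← Matrix.conjTranspose_mul, c1]
  calc (A t ⊗ₖ (1 : Matrix R R ℂ)) * (((1 : Matrix I I ℂ) ⊗ₖ W) * X * ((1 : Matrix I I ℂ) ⊗ₖ W)ᴴ) *
        (A t ⊗ₖ (1 : Matrix R R ℂ))ᴴ
      = ((A t ⊗ₖ (1 : Matrix R R ℂ)) * ((1 : Matrix I I ℂ) ⊗ₖ W)) * X *
        (((1 : Matrix I I ℂ) ⊗ₖ W)ᴴ * (A t ⊗ₖ (1 : Matrix R R ℂ))ᴴ) := by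
        simp only [Matrix.mul_assoc]
    _ = (((1 : Matrix O O ℂ) ⊗ₖ W) * (A t ⊗ₖ (1 : Matrix R R ℂ))) * X *
        ((A t ⊗ₖ (1 : Matrix R R ℂ))ᴴ * ((1 : Matrix O O ℂ) ⊗ₖ W)ᴴ) := by rw [c1, c2]
    _ = ((1 : Matrix O O ℂ) ⊗ₖ W) * ((A t ⊗ₖ (1 : Matrix R R ℂ)) * X *
        (A t ⊗ₖ (1 : Matrix R R ℂ))ᴴ) * ((1 : Matrix O O ℂ) ⊗ₖ W)ᴴ := by
        simp only [Matrix.mul_assoc]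

lemma entropy_smul_one {d : ℕ} [NeZero d] :
    entropy ((d : ℂ)⁻¹ • (1 : Matrix (Fin d) (Fin d) ℂ)) = Real.logb 2 d := by
  have e : (d : ℂ)⁻¹ • (1 : Matrix (Fin d) (Fin d) ℂ) =
      1 * Matrix.diagonal (fun _ : Fin d => (((d : ℝ)⁻¹ : ℝ) : ℂ)) *
        (1 : Matrix (Fin d) (Fin d) ℂ)ᴴ := by
    rw [Matrix.conjTranspose_one, Matrix.one_mul, Matrix.mul_one, smul_one_diag]
    congr 1
    funext i
    push_cast
    ring
  rw [e, entropy_conj_diag 1 (by simp) (by simp)]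
  rw [Finset.sum_const, Finset.card_univ, Fintype.card_fin, nsmul_eq_mul, Real.logb_inv]
  have hd : (d : ℝ) ≠ 0 := d_real_ne
  field_simp

lemma entropy_kron_unif {n : Type*} [Fintype n] [DecidableEq n] {d : ℕ} [NeZero d]
    (ρ : Matrix n n ℂ) (hρ : ρ.IsHermitian) (hpsd : ρ.PosSemidef) (htr : ρ.trace = 1) :
    entropy (ρ ⊗ₖ ((d : ℂ)⁻¹ • (1 : Matrix (Fin d) (Fin d) ℂ))) =
      entropy ρ + Real.logb 2 d := by
  set U : Matrix n n ℂ := (hρ.eigenvectorUnitary : Matrix n n ℂ) with hUdef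
  have hU1 : U * Uᴴ = 1 := by
    simpa [star] using (Matrix.mem_unitaryGroup_iff.mp hρ.eigenvectorUnitary.2)
  have hU2 : Uᴴ * U = 1 := by
    simpa [star] using (Matrix.mem_unitaryGroup_iff'.mp hρ.eigenvectorUnitary.2)
  have hk1 : (U ⊗ₖ (1 : Matrix (Fin d) (Fin d) ℂ)) * (U ⊗ₖ (1 : Matrix (Fin d) (Fin d) ℂ))ᴴ = 1 :=
    kron_left_unitary U hU1
  have hk2 : (U ⊗ₖ (1 : Matrix (Fin d) (Fin d) ℂ))ᴴ * (U ⊗ₖ (1 : Matrix (Fin d) (Fin d) ℂ)) = 1 :=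
    mul_eq_one_comm.mp hk1
  have e : ρ ⊗ₖ ((d : ℂ)⁻¹ • (1 : Matrix (Fin d) (Fin d) ℂ)) =
      (U ⊗ₖ (1 : Matrix (Fin d) (Fin d) ℂ)) *
        Matrix.diagonal (fun p : n × Fin d => ((hρ.eigenvalues p.1 / d : ℝ) : ℂ)) *
        (U ⊗ₖ (1 : Matrix (Fin d) (Fin d) ℂ))ᴴ := by
    conv_lhs => rw [hρ.spectral_theorem, smul_one_diag]
    rw [show Matrix.diagonal (fun _ : Fin d => (d : ℂ)⁻¹) =
        1 * Matrix.diagonal (fun _ : Fin d => (d : ℂ)⁻¹) * 1 by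
      rw [Matrix.one_mul, Matrix.mul_one]]
    rw [Unitary.conjStarAlgAut_apply]
    rw [Matrix.mul_kronecker_mul, Matrix.mul_kronecker_mul, Matrix.diagonal_kronecker_diagonal,
      kron_conjTranspose, Matrix.conjTranspose_one]
    congr 1
    · congr 1
      rw [Matrix.diagonal_eq_diagonal_iff]
      intro p
      simp only [Function.comp_apply]
      push_cast
      rw [div_eq_mul_inv]
      rfl
  rw [e, entropy_conj_diag _ hk1 hk2, entropy, dif_pos hρ, Fintype.sum_prod_type]
  have hsum := sum_eigenvalues_eq_one hρ htr
  have hd : (d : ℝ) ≠ 0 := d_real_ne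
  have key : ∀ i : n, ∑ _r : Fin d,
      (hρ.eigenvalues i / d) * Real.logb 2 (hρ.eigenvalues i / d) =
      hρ.eigenvalues i * Real.logb 2 (hρ.eigenvalues i) - hρ.eigenvalues i * Real.logb 2 d := by
    intro i
    rw [Finset.sum_const, Finset.card_univ, Fintype.card_fin, nsmul_eq_mul]
    rcases eq_or_lt_of_le (hpsd.eigenvalues_nonneg i) with h0 | h0
    · rw [← h0]
      simp
    · rw [Real.logb_div (ne_of_gt h0) hd]
      field_simp
  rw [Finset.sum_congr rfl (fun i _ => key i), Finset.sum_sub_distrib, ← Finset.sum_mul, hsum]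
  ring

end Channel

/-- **Holevo quantity of the superdense-coding ensemble.** For the ensemble of `d²`
equiprobable states `σ_{j,k} = (N⊗I)((U_{j,k}⊗I) φ (U_{j,k}⊗I)†)`, the Holevo quantity
equals `H(I/d) + H(N(I/d)) − H((N⊗I)(φ)) = log₂ d + H(N(I/d)) − H((N⊗I)(φ))`. -/
theorem holevo_quantity_superdense_ensemble
    {d dout c : ℕ} (hd : 1 ≤ d)
    (A : Fin c → Matrix (Fin dout) (Fin d) ℂ) (hA : IsKraus A)
    (σ : Fin d → Fin d → Matrix (Fin dout × Fin d) (Fin dout × Fin d) ℂ)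
    (hσ : σ = fun j k =>
      kApplyLeft A
        ((pauliU d j k ⊗ₖ (1 : Matrix (Fin d) (Fin d) ℂ)) * pureState (maxEnt d) *
          (pauliU d j k ⊗ₖ (1 : Matrix (Fin d) (Fin d) ℂ))ᴴ)) :
    entropy (((d : ℂ) ^ 2)⁻¹ • ∑ j : Fin d, ∑ k : Fin d, σ j k) -
        ((d : ℝ) ^ 2)⁻¹ * ∑ j : Fin d, ∑ k : Fin d, entropy (σ j k) =
      entropy ((d : ℂ)⁻¹ • (1 : Matrix (Fin d) (Fin d) ℂ)) +
        entropy (kApply A ((d : ℂ)⁻¹ • (1 : Matrix (Fin d) (Fin d) ℂ))) -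
        entropy (kApplyLeft A (pureState (maxEnt d))) ∧
    entropy ((d : ℂ)⁻¹ • (1 : Matrix (Fin d) (Fin d) ℂ)) +
        entropy (kApply A ((d : ℂ)⁻¹ • (1 : Matrix (Fin d) (Fin d) ℂ))) -
        entropy (kApplyLeft A (pureState (maxEnt d))) =
      Real.logb 2 d +
        entropy (kApply A ((d : ℂ)⁻¹ • (1 : Matrix (Fin d) (Fin d) ℂ))) -
        entropy (kApplyLeft A (pureState (maxEnt d))) := by
  haveI : NeZero d := ⟨by omega⟩
  have hφherm : (pureState (maxEnt d)).IsHermitian := pureState_isHermitian _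
  have hBherm : (kApplyLeft A (pureState (maxEnt d))).IsHermitian :=
    kApplyLeft_isHermitian A hφherm
  have hentσ : ∀ j k : Fin d, entropy (σ j k) = entropy (kApplyLeft A (pureState (maxEnt d))) := by
    intro j k
    simp only [hσ]
    rw [ricochet, kApplyLeft_conj A ((pauliU d j k)ᵀ) (pureState (maxEnt d))]
    have hu1 : ((1 : Matrix (Fin dout) (Fin dout) ℂ) ⊗ₖ (pauliU d j k)ᵀ) *
        ((1 : Matrix (Fin dout) (Fin dout) ℂ) ⊗ₖ (pauliU d j k)ᵀ)ᴴ = 1 :=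
      kron_one_right_unitary _ (transpose_unitary _ (pauliU_conjTranspose_mul j k))
    exact entropy_unitary_conj _ _ hu1 (mul_eq_one_comm.mp hu1) hBherm
  have havg : ((d : ℂ) ^ 2)⁻¹ • ∑ j : Fin d, ∑ k : Fin d, σ j k =
      (kApply A ((d : ℂ)⁻¹ • 1)) ⊗ₖ ((d : ℂ)⁻¹ • (1 : Matrix (Fin d) (Fin d) ℂ)) := by
    have hsum : ∑ j : Fin d, ∑ k : Fin d, σ j k =
        kApplyLeft A (1 : Matrix (Fin d × Fin d) (Fin d × Fin d) ℂ) := by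
      simp only [hσ]
      calc ∑ j : Fin d, ∑ k : Fin d, kApplyLeft A
            ((pauliU d j k ⊗ₖ (1 : Matrix (Fin d) (Fin d) ℂ)) * pureState (maxEnt d) *
              (pauliU d j k ⊗ₖ (1 : Matrix (Fin d) (Fin d) ℂ))ᴴ)
          = ∑ j : Fin d, kApplyLeft A (∑ k : Fin d,
              (pauliU d j k ⊗ₖ (1 : Matrix (Fin d) (Fin d) ℂ)) * pureState (maxEnt d) *
                (pauliU d j k ⊗ₖ (1 : Matrix (Fin d) (Fin d) ℂ))ᴴ) :=
            Finset.sum_congr rfl fun j _ => (kApplyLeft_sum A Finset.univ _).symm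
        _ = kApplyLeft A (∑ j : Fin d, ∑ k : Fin d,
              (pauliU d j k ⊗ₖ (1 : Matrix (Fin d) (Fin d) ℂ)) * pureState (maxEnt d) *
                (pauliU d j k ⊗ₖ (1 : Matrix (Fin d) (Fin d) ℂ))ᴴ) :=
            (kApplyLeft_sum A Finset.univ _).symm
        _ = kApplyLeft A 1 := by rw [sum_pauli_conj]
    rw [hsum, kApplyLeft_one, kApply_smul_one, Matrix.smul_kronecker, Matrix.kronecker_smul,
      smul_smul]
    congr 1
    rw [sq, mul_inv]
  have hρherm : (kApply A ((d : ℂ)⁻¹ • 1)).IsHermitian :=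
    kApply_isHermitian A (smul_one_posSemidef (d := d)).1
  have hρpsd := kApply_posSemidef A (smul_one_posSemidef (d := d))
  have hρtr := kApply_smul_one_trace A hA
  have hEavg : entropy (((d : ℂ) ^ 2)⁻¹ • ∑ j : Fin d, ∑ k : Fin d, σ j k) =
      entropy (kApply A ((d : ℂ)⁻¹ • 1)) + Real.logb 2 d := by
    rw [havg]
    exact entropy_kron_unif _ hρherm hρpsd hρtr
  have hEsum : ((d : ℝ) ^ 2)⁻¹ * ∑ j : Fin d, ∑ k : Fin d, entropy (σ j k) =
      entropy (kApplyLeft A (pureState (maxEnt d))) := by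
    simp only [hentσ]
    rw [Finset.sum_const, Finset.sum_const, Finset.card_univ, Fintype.card_fin,
      nsmul_eq_mul, nsmul_eq_mul]
    have hd : (d : ℝ) ≠ 0 := d_real_ne
    field_simp
  refine ⟨?_, ?_⟩
  · rw [hEavg, hEsum, entropy_smul_one]
    ring
  · rw [entropy_smul_one]


end

end QIT
end

section
/- Let λ be a probability distribution on a d-element input alphabet, let (p_{jk}) be a stochastic matrix to a d_out-element output alphabet (p_{jk} ≥ 0, Σ_k p_{jk} = 1), and set ω_k = Σ_j λ_j p_{jk}. Let δ > 0 and let s ∈ {1,…,d}^n satisfy |N_j(s) − nλ_j| < δn for all j. Let r ∈ {1,…,d_out}^n be random with independent coordinates, coordinate i distributed according to p_{s_i,·}. Then P[ there exists k with |N_k(r) − nω_k| ≥ (d+1)δn ] ≤ 2 d_out e^{−2δ²n}; in particular the output string is (d+1)δ-typical for ω with probability at least 1 − 2 d_out e^{−2δ²n}. -/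
namespace CIT

noncomputable section

open scoped Classical

/-- The number of occurrences of the letter `k` in the string `r`. -/
def occCount {n : ℕ} {A : Type*} [DecidableEq A] (r : Fin n → A) (k : A) : ℕ :=
  (Finset.univ.filter fun i => r i = k).card

open Real in
lemma hoeffding_bernoulli (q : ℝ) (h0 : 0 ≤ q) (h1 : q ≤ 1) (t : ℝ) :
    1 - q + q * Real.exp t ≤ Real.exp (t * q + t ^ 2 / 8) := by
  set D : ℝ → ℝ := fun x => 1 - q + q * Real.exp x with hDdef
  have hD : ∀ x, 0 < D x := by
    intro x
    rcases le_or_gt 1 (Real.exp x) with h | h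
    · have := mul_le_mul_of_nonneg_left h h0
      simp only [hDdef, mul_one] at *
      linarith
    · simp only [hDdef]
      nlinarith [Real.exp_pos x, mul_nonneg (sub_nonneg.2 h1) (sub_nonneg.2 h.le)]
  set φ : ℝ → ℝ := fun x => q + x / 4 - q * Real.exp x / D x with hφdef
  have hDd : ∀ x, HasDerivAt D (q * Real.exp x) x := fun x =>
    ((Real.hasDerivAt_exp x).const_mul q).const_add (1 - q)
  have hφd : ∀ x, HasDerivAt φ
      (1 / 4 - (q * Real.exp x * D x - q * Real.exp x * (q * Real.exp x)) / D x ^ 2) x := by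
    intro x
    have hnum : HasDerivAt (fun x => q * Real.exp x) (q * Real.exp x) x :=
      (Real.hasDerivAt_exp x).const_mul q
    have hdiv := hnum.div (hDd x) (hD x).ne'
    have h14 : HasDerivAt (fun x : ℝ => q + x / 4) (1 / 4) x := by
      simpa using ((hasDerivAt_id x).div_const 4).const_add q
    exact h14.sub hdiv
  have hφ' : ∀ x, 0 ≤ 1 / 4 - (q * Real.exp x * D x - q * Real.exp x * (q * Real.exp x)) / D x ^ 2 := by
    intro x
    rw [sub_nonneg, div_le_iff₀ (pow_pos (hD x) 2)]
    have he := Real.exp_pos x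
    simp only [hDdef]
    nlinarith [sq_nonneg (1 - q - q * Real.exp x), mul_nonneg h0 he.le]
  have hφmono : Monotone φ := by
    apply monotone_of_deriv_nonneg
    · exact fun x => (hφd x).differentiableAt
    · intro x
      rw [(hφd x).deriv]
      exact hφ' x
  set F : ℝ → ℝ := fun x => x * q + x ^ 2 / 8 - Real.log (D x) with hFdef
  have hFd : ∀ x, HasDerivAt F (φ x) x := by
    intro x
    have h1' : HasDerivAt (fun x : ℝ => x * q + x ^ 2 / 8) (q + x / 4) x := by
      have := ((hasDerivAt_id x).mul_const q).add ((hasDerivAt_pow 2 x).div_const 8)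
      refine this.congr_deriv ?_
      norm_num
      ring
    have hlog : HasDerivAt (fun x => Real.log (D x)) (q * Real.exp x / D x) x :=
      (hDd x).log (hD x).ne'
    exact h1'.sub hlog
  have hF0 : F 0 = 0 := by simp [hFdef, hDdef]
  have hφ0 : φ 0 = 0 := by
    simp only [hφdef, hDdef, Real.exp_zero, mul_one]
    field_simp
    ring
  have hFnonneg : ∀ x, 0 ≤ F x := by
    intro x
    rcases le_or_gt 0 x with hx | hx
    · have hmono : MonotoneOn F (Set.Ici 0) := by
        apply monotoneOn_of_deriv_nonneg (convex_Ici 0)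
        · exact fun y _ => (hFd y).differentiableAt.continuousAt.continuousWithinAt
        · exact fun y _ => (hFd y).differentiableAt.differentiableWithinAt
        · intro y hy
          rw [(hFd y).deriv]
          rw [interior_Ici] at hy
          have := hφmono (le_of_lt hy)
          rw [hφ0] at this
          exact this
      have := hmono (Set.self_mem_Ici) (Set.mem_Ici.2 hx) hx
      linarith [hF0 ▸ this]
    · have hanti : AntitoneOn F (Set.Iic 0) := by
        apply antitoneOn_of_deriv_nonpos (convex_Iic 0)
        · exact fun y _ => (hFd y).differentiableAt.continuousAt.continuousWithinAt
        · exact fun y _ => (hFd y).differentiableAt.differentiableWithinAt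
        · intro y hy
          rw [(hFd y).deriv]
          rw [interior_Iic] at hy
          have := hφmono (le_of_lt hy)
          rw [hφ0] at this
          exact this
      have := hanti (Set.mem_Iic.2 hx.le) (Set.self_mem_Iic) hx.le
      linarith [hF0 ▸ this]
  have := hFnonneg t
  have hlog : Real.log (D t) ≤ t * q + t ^ 2 / 8 := by
    simp only [hFdef] at this; linarith
  calc D t = Real.exp (Real.log (D t)) := (Real.exp_log (hD t)).symm
    _ ≤ Real.exp (t * q + t ^ 2 / 8) := Real.exp_le_exp.2 hlog

lemma occCount_eq_sum {n dout : ℕ} (r : Fin n → Fin dout) (k : Fin dout) :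
    (occCount r k : ℝ) = ∑ i, if r i = k then (1:ℝ) else 0 := by
  rw [occCount, Finset.card_filter]
  push_cast
  exact Finset.sum_congr rfl fun i _ => by split <;> simp

lemma chernoff_key {n dout : ℕ} (w : Fin n → Fin dout → ℝ)
    (h0 : ∀ i c, 0 ≤ w i c) (h1 : ∀ i, ∑ c, w i c = 1) (k : Fin dout)
    (t b : ℝ) (E : Finset (Fin n → Fin dout))
    (hE : ∀ r ∈ E, b ≤ t * (occCount r k : ℝ)) :
    ∑ r ∈ E, ∏ i, w i (r i) ≤
      Real.exp (-b) * ∏ i, (1 - w i k + w i k * Real.exp t) := by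
  have hprodnn : ∀ r : Fin n → Fin dout, 0 ≤ ∏ i, w i (r i) := fun r =>
    Finset.prod_nonneg fun i _ => h0 i (r i)
  have step1 : ∑ r ∈ E, ∏ i, w i (r i) ≤
      ∑ r ∈ E, Real.exp (-b) * ((∏ i, w i (r i)) * Real.exp (t * (occCount r k : ℝ))) := by
    apply Finset.sum_le_sum
    intro r hr
    have h1' : (1:ℝ) ≤ Real.exp (t * (occCount r k : ℝ) - b) := by
      have := Real.add_one_le_exp (t * (occCount r k : ℝ) - b)
      linarith [hE r hr]
    calc ∏ i, w i (r i) = (∏ i, w i (r i)) * 1 := by ring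
      _ ≤ (∏ i, w i (r i)) * Real.exp (t * (occCount r k : ℝ) - b) :=
          mul_le_mul_of_nonneg_left h1' (hprodnn r)
      _ = Real.exp (-b) * ((∏ i, w i (r i)) * Real.exp (t * (occCount r k : ℝ))) := by
          rw [Real.exp_sub, div_eq_mul_inv, Real.exp_neg]; ring
  have step2 : ∑ r ∈ E, Real.exp (-b) * ((∏ i, w i (r i)) * Real.exp (t * (occCount r k : ℝ)))
      ≤ ∑ r : Fin n → Fin dout, Real.exp (-b) * ((∏ i, w i (r i)) * Real.exp (t * (occCount r k : ℝ))) := by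
    apply Finset.sum_le_sum_of_subset_of_nonneg (Finset.subset_univ E)
    intro r _ _
    exact mul_nonneg (Real.exp_nonneg _) (mul_nonneg (hprodnn r) (Real.exp_nonneg _))
  have key : ∀ r : Fin n → Fin dout,
      (∏ i, w i (r i)) * Real.exp (t * (occCount r k : ℝ)) =
        ∏ i, (w i (r i) * Real.exp (t * if r i = k then (1:ℝ) else 0)) := by
    intro r
    rw [Finset.prod_mul_distrib, ← Real.exp_sum, occCount_eq_sum, Finset.mul_sum]
  have step3 : ∑ r : Fin n → Fin dout, ∏ i, (w i (r i) * Real.exp (t * if r i = k then (1:ℝ) else 0))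
      = ∏ i, ∑ c, (w i c * Real.exp (t * if c = k then (1:ℝ) else 0)) := by
    rw [Finset.prod_univ_sum]
    rw [Fintype.piFinset_univ]
  have step4 : ∀ i, ∑ c, (w i c * Real.exp (t * if c = k then (1:ℝ) else 0))
      = 1 - w i k + w i k * Real.exp t := by
    intro i
    have : ∀ c, w i c * Real.exp (t * if c = k then (1:ℝ) else 0)
        = w i c + (if c = k then w i k * (Real.exp t - 1) else 0) := by
      intro c
      split
      · next h => subst h; simp [mul_one]; ring
      · simp [Real.exp_zero]
    rw [Finset.sum_congr rfl fun c _ => this c, Finset.sum_add_distrib,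
      Finset.sum_ite_eq' Finset.univ k, h1 i]
    simp
    ring
  calc ∑ r ∈ E, ∏ i, w i (r i)
      ≤ ∑ r : Fin n → Fin dout, Real.exp (-b) * ((∏ i, w i (r i)) * Real.exp (t * (occCount r k : ℝ))) :=
        le_trans step1 step2
    _ = Real.exp (-b) * ∑ r : Fin n → Fin dout, ∏ i, (w i (r i) * Real.exp (t * if r i = k then (1:ℝ) else 0)) := by
        rw [← Finset.mul_sum]
        congr 1
        exact Finset.sum_congr rfl fun r _ => key r
    _ = Real.exp (-b) * ∏ i, (1 - w i k + w i k * Real.exp t) := by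
        rw [step3]
        congr 1
        exact Finset.prod_congr rfl fun i _ => step4 i

lemma chernoff_exp {n dout : ℕ} (w : Fin n → Fin dout → ℝ)
    (h0 : ∀ i c, 0 ≤ w i c) (h1 : ∀ i, ∑ c, w i c = 1) (k : Fin dout)
    (t b : ℝ) (E : Finset (Fin n → Fin dout))
    (hE : ∀ r ∈ E, b ≤ t * (occCount r k : ℝ)) :
    ∑ r ∈ E, ∏ i, w i (r i) ≤
      Real.exp (-b + t * (∑ i, w i k) + n * (t ^ 2 / 8)) := by
  have hq : ∀ i, w i k ≤ 1 := by
    intro i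
    rw [← h1 i]
    exact Finset.single_le_sum (fun c _ => h0 i c) (Finset.mem_univ k)
  have hprod : ∏ i, (1 - w i k + w i k * Real.exp t) ≤
      ∏ i, Real.exp (t * w i k + t ^ 2 / 8) := by
    apply Finset.prod_le_prod
    · intro i _
      nlinarith [mul_nonneg (h0 i k) (Real.exp_pos t).le, hq i,
        hoeffding_bernoulli (w i k) (h0 i k) (hq i) t, Real.exp_pos (t * w i k + t ^ 2 / 8)]
    · exact fun i _ => hoeffding_bernoulli (w i k) (h0 i k) (hq i) t
  calc ∑ r ∈ E, ∏ i, w i (r i)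
      ≤ Real.exp (-b) * ∏ i, (1 - w i k + w i k * Real.exp t) :=
        chernoff_key w h0 h1 k t b E hE
    _ ≤ Real.exp (-b) * ∏ i, Real.exp (t * w i k + t ^ 2 / 8) :=
        mul_le_mul_of_nonneg_left hprod (Real.exp_nonneg _)
    _ = Real.exp (-b + t * (∑ i, w i k) + n * (t ^ 2 / 8)) := by
        rw [← Real.exp_sum, ← Real.exp_add]
        congr 1
        rw [Finset.sum_add_distrib, Finset.sum_const, Finset.card_univ, Fintype.card_fin,
          ← Finset.mul_sum, nsmul_eq_mul]
        ring

lemma sum_filter_exists_le {α β : Type*} [Fintype α] [Fintype β] (f : α → ℝ)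
    (hf : ∀ a, 0 ≤ f a) (P : β → α → Prop) :
    ∑ a ∈ Finset.univ.filter (fun a => ∃ b, P b a), f a ≤
      ∑ b : β, ∑ a ∈ Finset.univ.filter (P b), f a := by
  have h1 : ∀ a ∈ Finset.univ.filter (fun a => ∃ b, P b a),
      f a ≤ ∑ b : β, (if P b a then f a else 0) := by
    intro a ha
    obtain ⟨b, hb⟩ := (Finset.mem_filter.1 ha).2
    have hterm : f a = if P b a then f a else 0 := by simp [hb]
    exact hterm.le.trans
      (Finset.single_le_sum (f := fun b => if P b a then f a else 0)
        (fun b _ => by split <;> simp [hf a]) (Finset.mem_univ b))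
  calc ∑ a ∈ Finset.univ.filter (fun a => ∃ b, P b a), f a
      ≤ ∑ a ∈ Finset.univ.filter (fun a => ∃ b, P b a), ∑ b : β, (if P b a then f a else 0) :=
        Finset.sum_le_sum h1
    _ ≤ ∑ a : α, ∑ b : β, (if P b a then f a else 0) := by
        apply Finset.sum_le_sum_of_subset_of_nonneg (Finset.filter_subset _ _)
        intro a _ _
        exact Finset.sum_nonneg fun b _ => by split <;> simp [hf a]
    _ = ∑ b : β, ∑ a : α, (if P b a then f a else 0) := Finset.sum_comm
    _ = ∑ b : β, ∑ a ∈ Finset.univ.filter (P b), f a := by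
        exact Finset.sum_congr rfl fun b _ => (Finset.sum_filter _ _).symm

lemma sum_filter_or_le {α : Type*} [Fintype α] (f : α → ℝ) (hf : ∀ a, 0 ≤ f a)
    (P Q1 Q2 : α → Prop) (h : ∀ a, P a → Q1 a ∨ Q2 a) :
    ∑ a ∈ Finset.univ.filter P, f a ≤
      ∑ a ∈ Finset.univ.filter Q1, f a + ∑ a ∈ Finset.univ.filter Q2, f a := by
  rw [← Finset.sum_filter_add_sum_filter_not (Finset.univ.filter P) Q1 f]
  apply add_le_add
  · apply Finset.sum_le_sum_of_subset_of_nonneg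
    · intro a ha
      simp only [Finset.mem_filter] at *
      exact ⟨ha.1.1, ha.2⟩
    · exact fun a _ _ => hf a
  · apply Finset.sum_le_sum_of_subset_of_nonneg
    · intro a ha
      simp only [Finset.mem_filter] at *
      exact ⟨ha.1.1, (h a ha.1.2).resolve_left ha.2⟩
    · exact fun a _ _ => hf a


/-- **Chernoff/Hoeffding bound for the output type of a typical input:** let `λ` be a
distribution on `{1,…,d}`, `(p_{jk})` a stochastic matrix to `{1,…,d_out}` and
`ω_k = Σ_j λ_j p_{jk}`. If `s` is a `δ`-typical input string and the output string `r`
has independent coordinates, coordinate `i` distributed as `p_{s_i,·}`, then the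
probability that some output letter count deviates from `nω_k` by at least `(d+1)δn`
is at most `2·d_out·e^{−2δ²n}`; in particular `r` is `(d+1)δ`-typical for `ω` with
probability at least `1 − 2·d_out·e^{−2δ²n}`. -/
theorem output_frequency_typical_chernoff
    {d dout n : ℕ}
    (lam : Fin d → ℝ) (hlam0 : ∀ j, 0 ≤ lam j) (hlam1 : ∑ j, lam j = 1)
    (p : Fin d → Fin dout → ℝ)
    (hp0 : ∀ j k, 0 ≤ p j k) (hp1 : ∀ j, ∑ k, p j k = 1)
    (ω : Fin dout → ℝ) (hω : ω = fun k => ∑ j, lam j * p j k)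
    (δ : ℝ) (hδ : 0 < δ)
    (s : Fin n → Fin d)
    (hs : ∀ j : Fin d, |(occCount s j : ℝ) - n * lam j| < δ * n) :
    ∑ r ∈ Finset.univ.filter (fun r : Fin n → Fin dout =>
        ∃ k : Fin dout, ((d : ℝ) + 1) * δ * n ≤ |(occCount r k : ℝ) - n * ω k|),
      ∏ i, p (s i) (r i) ≤
      2 * dout * Real.exp (-2 * δ ^ 2 * n) := by
  set μ : Fin dout → ℝ := fun k => ∑ i, p (s i) k with hμdef
  have hwnn : ∀ r : Fin n → Fin dout, 0 ≤ ∏ i, p (s i) (r i) := fun r =>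
    Finset.prod_nonneg fun i _ => hp0 (s i) (r i)
  have hmu : ∀ k, μ k = ∑ j, (occCount s j : ℝ) * p j k := by
    intro k
    rw [hμdef]
    dsimp only
    rw [← Finset.sum_fiberwise Finset.univ s (fun i => p (s i) k)]
    apply Finset.sum_congr rfl
    intro j _
    have hcongr : ∑ i ∈ Finset.univ.filter (fun i => s i = j), p (s i) k
        = ∑ i ∈ Finset.univ.filter (fun i => s i = j), p j k :=
      Finset.sum_congr rfl fun i hi => by rw [(Finset.mem_filter.1 hi).2]
    rw [hcongr, Finset.sum_const, nsmul_eq_mul, occCount]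
  have hclose : ∀ k, |μ k - n * ω k| ≤ (d : ℝ) * (δ * n) := by
    intro k
    have hω' : (n : ℝ) * ω k = ∑ j, (n : ℝ) * lam j * p j k := by
      rw [hω]; dsimp only; rw [Finset.mul_sum]; exact Finset.sum_congr rfl fun j _ => by ring
    have hdiff : μ k - n * ω k = ∑ j, ((occCount s j : ℝ) - n * lam j) * p j k := by
      rw [hmu k, hω', ← Finset.sum_sub_distrib]
      exact Finset.sum_congr rfl fun j _ => by ring
    rw [hdiff]
    calc |∑ j, ((occCount s j : ℝ) - n * lam j) * p j k|
        ≤ ∑ j, |((occCount s j : ℝ) - n * lam j) * p j k| := Finset.abs_sum_le_sum_abs _ _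
      _ ≤ ∑ j : Fin d, δ * n := by
          apply Finset.sum_le_sum
          intro j _
          rw [abs_mul, abs_of_nonneg (hp0 j k)]
          have hpk1 : p j k ≤ 1 := by
            rw [← hp1 j]
            exact Finset.single_le_sum (fun c _ => hp0 j c) (Finset.mem_univ k)
          have habs := (hs j).le
          nlinarith [abs_nonneg ((occCount s j : ℝ) - n * lam j)]
      _ = (d : ℝ) * (δ * n) := by
          rw [Finset.sum_const, Finset.card_univ, Fintype.card_fin, nsmul_eq_mul]
  have hδn : 0 ≤ δ * n := by positivity
  have hsub : ∀ r : Fin n → Fin dout,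
      (∃ k : Fin dout, ((d : ℝ) + 1) * δ * n ≤ |(occCount r k : ℝ) - n * ω k|) →
      ∃ k : Fin dout, δ * n ≤ |(occCount r k : ℝ) - μ k| := by
    intro r ⟨k, hk⟩
    refine ⟨k, ?_⟩
    have htri : |(occCount r k : ℝ) - n * ω k| ≤
        |(occCount r k : ℝ) - μ k| + |μ k - n * ω k| := abs_sub_le _ _ _
    have hexp : ((d : ℝ) + 1) * δ * n = (d : ℝ) * (δ * n) + δ * n := by ring
    have := hclose k
    linarith
  have step_subset :
      ∑ r ∈ Finset.univ.filter (fun r : Fin n → Fin dout =>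
        ∃ k : Fin dout, ((d : ℝ) + 1) * δ * n ≤ |(occCount r k : ℝ) - n * ω k|),
        ∏ i, p (s i) (r i)
      ≤ ∑ r ∈ Finset.univ.filter (fun r : Fin n → Fin dout =>
        ∃ k : Fin dout, δ * n ≤ |(occCount r k : ℝ) - μ k|),
        ∏ i, p (s i) (r i) := by
    apply Finset.sum_le_sum_of_subset_of_nonneg
    · exact Finset.monotone_filter_right _ fun r _ hr => hsub r hr
    · exact fun r _ _ => hwnn r
  have step_union := sum_filter_exists_le (fun r : Fin n → Fin dout => ∏ i, p (s i) (r i))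
    hwnn (fun k r => δ * n ≤ |(occCount r k : ℝ) - μ k|)
  have tail : ∀ k : Fin dout,
      ∑ r ∈ Finset.univ.filter (fun r : Fin n → Fin dout =>
        δ * n ≤ |(occCount r k : ℝ) - μ k|), ∏ i, p (s i) (r i)
      ≤ 2 * Real.exp (-2 * δ ^ 2 * n) := by
    intro k
    have hsplit := sum_filter_or_le (fun r : Fin n → Fin dout => ∏ i, p (s i) (r i)) hwnn
      (fun r => δ * n ≤ |(occCount r k : ℝ) - μ k|)
      (fun r => μ k + δ * n ≤ (occCount r k : ℝ))
      (fun r => (occCount r k : ℝ) ≤ μ k - δ * n)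
      (by
        intro r hr
        rcases le_abs.1 hr with h | h
        · left; linarith
        · right; linarith)
    have hupper :
        ∑ r ∈ Finset.univ.filter (fun r : Fin n → Fin dout =>
          μ k + δ * n ≤ (occCount r k : ℝ)), ∏ i, p (s i) (r i)
        ≤ Real.exp (-2 * δ ^ 2 * n) := by
      have h := chernoff_exp (fun i c => p (s i) c) (fun i c => hp0 (s i) c)
        (fun i => hp1 (s i)) k (4 * δ) (4 * δ * (μ k + δ * n))
        (Finset.univ.filter (fun r : Fin n → Fin dout => μ k + δ * n ≤ (occCount r k : ℝ)))
        (by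
          intro r hr
          have hX := (Finset.mem_filter.1 hr).2
          have h4δ : (0:ℝ) ≤ 4 * δ := by linarith
          exact mul_le_mul_of_nonneg_left hX h4δ)
      calc ∑ r ∈ Finset.univ.filter (fun r : Fin n → Fin dout =>
            μ k + δ * n ≤ (occCount r k : ℝ)), ∏ i, p (s i) (r i)
          ≤ Real.exp (-(4 * δ * (μ k + δ * n)) + 4 * δ * (∑ i, p (s i) k)
              + n * ((4 * δ) ^ 2 / 8)) := h
        _ = Real.exp (-2 * δ ^ 2 * n) := by
            congr 1
            have : μ k = ∑ i, p (s i) k := rfl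
            rw [← this]
            ring
    have hlower :
        ∑ r ∈ Finset.univ.filter (fun r : Fin n → Fin dout =>
          (occCount r k : ℝ) ≤ μ k - δ * n), ∏ i, p (s i) (r i)
        ≤ Real.exp (-2 * δ ^ 2 * n) := by
      have h := chernoff_exp (fun i c => p (s i) c) (fun i c => hp0 (s i) c)
        (fun i => hp1 (s i)) k (-(4 * δ)) (-(4 * δ) * (μ k - δ * n))
        (Finset.univ.filter (fun r : Fin n → Fin dout => (occCount r k : ℝ) ≤ μ k - δ * n))
        (by
          intro r hr
          have hX := (Finset.mem_filter.1 hr).2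
          have h4δ : -(4 * δ) ≤ 0 := by linarith
          exact mul_le_mul_of_nonpos_left hX h4δ)
      calc ∑ r ∈ Finset.univ.filter (fun r : Fin n → Fin dout =>
            (occCount r k : ℝ) ≤ μ k - δ * n), ∏ i, p (s i) (r i)
          ≤ Real.exp (-(-(4 * δ) * (μ k - δ * n)) + (-(4 * δ)) * (∑ i, p (s i) k)
              + n * ((-(4 * δ)) ^ 2 / 8)) := h
        _ = Real.exp (-2 * δ ^ 2 * n) := by
            congr 1
            have : μ k = ∑ i, p (s i) k := rfl
            rw [← this]
            ring
    calc ∑ r ∈ Finset.univ.filter (fun r : Fin n → Fin dout =>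
          δ * n ≤ |(occCount r k : ℝ) - μ k|), ∏ i, p (s i) (r i)
        ≤ _ + _ := hsplit
      _ ≤ Real.exp (-2 * δ ^ 2 * n) + Real.exp (-2 * δ ^ 2 * n) := add_le_add hupper hlower
      _ = 2 * Real.exp (-2 * δ ^ 2 * n) := by ring
  calc ∑ r ∈ Finset.univ.filter (fun r : Fin n → Fin dout =>
        ∃ k : Fin dout, ((d : ℝ) + 1) * δ * n ≤ |(occCount r k : ℝ) - n * ω k|),
        ∏ i, p (s i) (r i)
      ≤ ∑ r ∈ Finset.univ.filter (fun r : Fin n → Fin dout =>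
        ∃ k : Fin dout, δ * n ≤ |(occCount r k : ℝ) - μ k|),
        ∏ i, p (s i) (r i) := step_subset
    _ ≤ ∑ k : Fin dout, ∑ r ∈ Finset.univ.filter (fun r : Fin n → Fin dout =>
        δ * n ≤ |(occCount r k : ℝ) - μ k|), ∏ i, p (s i) (r i) := by convert step_union
    _ ≤ ∑ _k : Fin dout, 2 * Real.exp (-2 * δ ^ 2 * n) :=
        Finset.sum_le_sum fun k _ => tail k
    _ = 2 * dout * Real.exp (-2 * δ ^ 2 * n) := by
        rw [Finset.sum_const, Finset.card_univ, Fintype.card_fin, nsmul_eq_mul]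
        ring


end

end CIT
end
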